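/- arXiv:2003.09358 — 3 statements merged into one kernel-verified Lean document; each statement's English description precedes it below -/
import Mathlib

section
/- Let β ∈ (−1,1), β ≠ 0, α = √(1−β²), and let W_β(t,x) = 4·arctan(e^x) + 4·arctan(g(t,x)/h(t,x)) with g(t,x) = β(sinh(x) cos(αt) − sinh(βx)) and h(t,x) = cosh(x) cosh(βx) − β sinh(x) sinh(βx) − β cos(αt) (where h ≥ 1−|β| > 0), and let Q(x) = 4·arctan(e^x) be the static kink. Then for every fixed t ∈ ℝ, the function x ↦ W_β(t,x) − Q(x) is odd in x, and the function x ↦ ∂_t W_β(t,x) is odd in x. In other words, the wobbling kink is an (odd, odd) perturbation of the static kink (Q, 0). -/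
/-- Numerator in the wobbling kink formula. -/
noncomputable def wobG (β t x : ℝ) : ℝ :=
  β * (Real.sinh x * Real.cos (Real.sqrt (1 - β ^ 2) * t) - Real.sinh (β * x))

/-- Denominator in the wobbling kink formula. -/
noncomputable def wobH (β t x : ℝ) : ℝ :=
  Real.cosh x * Real.cosh (β * x) - β * Real.sinh x * Real.sinh (β * x)
    - β * Real.cos (Real.sqrt (1 - β ^ 2) * t)

/-- The sine-Gordon wobbling kink with parameter β. -/
noncomputable def wobblingKink (β t x : ℝ) : ℝ :=
  4 * Real.arctan (Real.exp x) + 4 * Real.arctan (wobG β t x / wobH β t x)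

/-- The static sine-Gordon kink. -/
noncomputable def staticKink (x : ℝ) : ℝ := 4 * Real.arctan (Real.exp x)

/-! Since `g` is odd and `h` is even in `x`, the perturbation `W_β − Q = 4 arctan (g / h)` is odd
in `x` for every `t`; differentiating an odd-in-`x` family in `t` keeps it odd. -/

theorem deriv_neg_of_forall_sub_odd {𝕜 E F : Type*} [NontriviallyNormedField 𝕜] [Neg E]
    [NormedAddCommGroup F] [NormedSpace 𝕜 F] {f : 𝕜 → E → F} {c : E → F}
    (h : ∀ s x, f s (-x) - c (-x) = -(f s x - c x)) (t : 𝕜) (x : E) :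
    deriv (fun s => f s (-x)) t = -deriv (fun s => f s x) t := by
  have hf : (fun s => f s (-x)) = fun s => (c (-x) + c x) - f s x := by
    funext s
    have hs := h s x
    rw [neg_sub, sub_eq_sub_iff_add_eq_add] at hs
    rw [eq_sub_iff_add_eq, hs, add_comm]
  rw [hf, deriv_const_sub]

theorem wobG_neg (β t x : ℝ) : wobG β t (-x) = -wobG β t x := by
  simp only [wobG, mul_neg, Real.sinh_neg]
  ring

theorem wobH_neg (β t x : ℝ) : wobH β t (-x) = wobH β t x := by
  simp only [wobH, mul_neg, Real.sinh_neg, Real.cosh_neg]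
  ring

theorem wobblingKink_sub_staticKink (β t x : ℝ) :
    wobblingKink β t x - staticKink x = 4 * Real.arctan (wobG β t x / wobH β t x) := by
  rw [wobblingKink, staticKink, add_sub_cancel_left]

theorem wobblingKink_sub_staticKink_neg (β t x : ℝ) :
    wobblingKink β t (-x) - staticKink (-x) = -(wobblingKink β t x - staticKink x) := by
  rw [wobblingKink_sub_staticKink, wobblingKink_sub_staticKink, wobG_neg, wobH_neg, neg_div,
    Real.arctan_neg, mul_neg]

theorem wobblingKink_odd_perturbation_general
    (β : ℝ) (t : ℝ) :
    (∀ x : ℝ,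
      wobblingKink β t (-x) - staticKink (-x) = -(wobblingKink β t x - staticKink x))
    ∧ (∀ x : ℝ,
      deriv (fun s => wobblingKink β s (-x)) t
        = -deriv (fun s => wobblingKink β s x) t) :=
  ⟨wobblingKink_sub_staticKink_neg β t,
    deriv_neg_of_forall_sub_odd (wobblingKink_sub_staticKink_neg β) t⟩

/-- For every fixed t, the wobbling kink is an (odd, odd) perturbation of
the static kink (Q, 0): both x ↦ W_β(t,x) − Q(x) and x ↦ ∂ₜW_β(t,x) are odd in x. -/
theorem wobblingKink_odd_perturbation
    (β : ℝ) (hβ : β ∈ Set.Ioo (-1 : ℝ) 1) (hβ0 : β ≠ 0) (t : ℝ) :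
    (∀ x : ℝ,
      wobblingKink β t (-x) - staticKink (-x) = -(wobblingKink β t x - staticKink x))
    ∧ (∀ x : ℝ,
      deriv (fun s => wobblingKink β s (-x)) t
        = -deriv (fun s => wobblingKink β s x) t) :=
  wobblingKink_odd_perturbation_general β t
end

section
/- Let φ, ψ : ℝ × ℝ → ℝ be C² functions of (t,x) satisfying, for all (t,x), the linearized Bäcklund system around the sine-Gordon kink: ∂_x φ − ∂_t ψ = −tanh(x)·φ and ∂_t φ − ∂_x ψ = −tanh(x)·ψ. Then φ satisfies the linearized sine-Gordon equation around the kink, ∂_t² φ − ∂_x² φ + (1 − 2 sech²(x))·φ = 0, and ψ satisfies the linear Klein-Gordon equation ∂_t² ψ − ∂_x² ψ + ψ = 0. -/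
/-!
For a potential `a(x)`, differentiate `φ_x − ψ_t = −aφ` in `x` and `φ_t − ψ_x = −aψ` in `t` and
subtract: the mixed partials of the `C²` function `ψ` cancel, and substituting the first equation
back gives `φ_tt − φ_xx + (a² − a')φ = 0`. The system is invariant under `(φ, ψ, a) ↦ (ψ, φ, −a)`,
whence `ψ_tt − ψ_xx + (a² + a')ψ = 0`. For the kink `a = tanh` and `a' = 1 − tanh² = sech²`, so
`a² − a' = 1 − 2 sech²` and `a² + a' = 1`.
-/

open Function Real

namespace Real

theorem one_sub_tanh_sq (x : ℝ) : 1 - tanh x ^ 2 = (1 / cosh x) ^ 2 := by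
  rw [tanh_eq_sinh_div_cosh]
  field_simp
  linarith [cosh_sq_sub_sinh_sq x]

theorem hasDerivAt_tanh (x : ℝ) : HasDerivAt tanh (1 - tanh x ^ 2) x := by
  have h : HasDerivAt (fun y => sinh y / cosh y) _ x :=
    (hasDerivAt_sinh x).div (hasDerivAt_cosh x) (cosh_pos x).ne'
  rw [show tanh = fun y => sinh y / cosh y from funext tanh_eq_sinh_div_cosh]
  convert h using 1
  beta_reduce
  field_simp

theorem differentiable_tanh : Differentiable ℝ tanh :=
  fun x => (hasDerivAt_tanh x).differentiableAt

theorem deriv_tanh (x : ℝ) : deriv tanh x = 1 - tanh x ^ 2 := (hasDerivAt_tanh x).deriv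

end Real

noncomputable def partialFst (f : ℝ → ℝ → ℝ) (t x : ℝ) : ℝ := deriv (fun t' => f t' x) t

noncomputable def partialSnd (f : ℝ → ℝ → ℝ) (t x : ℝ) : ℝ := deriv (fun x' => f t x') x

section PartialDerivatives

variable {f : ℝ → ℝ → ℝ} {t x : ℝ}

theorem hasDerivAt_fderiv_fst (hf : DifferentiableAt ℝ (uncurry f) (t, x)) :
    HasDerivAt (fun t' => f t' x) (fderiv ℝ (uncurry f) (t, x) (1, 0)) t :=
  hf.hasFDerivAt.comp_hasDerivAt (l := uncurry f) t
    ((hasDerivAt_id' t).prodMk (hasDerivAt_const t x))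

theorem hasDerivAt_fderiv_snd (hf : DifferentiableAt ℝ (uncurry f) (t, x)) :
    HasDerivAt (fun x' => f t x') (fderiv ℝ (uncurry f) (t, x) (0, 1)) x :=
  hf.hasFDerivAt.comp_hasDerivAt (l := uncurry f) x
    ((hasDerivAt_const x t).prodMk (hasDerivAt_id' x))

theorem partialFst_eq_fderiv (hf : DifferentiableAt ℝ (uncurry f) (t, x)) :
    partialFst f t x = fderiv ℝ (uncurry f) (t, x) (1, 0) :=
  (hasDerivAt_fderiv_fst hf).deriv

theorem partialSnd_eq_fderiv (hf : DifferentiableAt ℝ (uncurry f) (t, x)) :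
    partialSnd f t x = fderiv ℝ (uncurry f) (t, x) (0, 1) :=
  (hasDerivAt_fderiv_snd hf).deriv

theorem hasDerivAt_partialFst (hf : DifferentiableAt ℝ (uncurry f) (t, x)) :
    HasDerivAt (fun t' => f t' x) (partialFst f t x) t :=
  (hasDerivAt_fderiv_fst hf).differentiableAt.hasDerivAt

theorem hasDerivAt_partialSnd (hf : DifferentiableAt ℝ (uncurry f) (t, x)) :
    HasDerivAt (fun x' => f t x') (partialSnd f t x) x :=
  (hasDerivAt_fderiv_snd hf).differentiableAt.hasDerivAt

theorem uncurry_partialFst (hf : Differentiable ℝ (uncurry f)) :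
    uncurry (partialFst f) = fun p => fderiv ℝ (uncurry f) p (1, 0) :=
  funext fun p => partialFst_eq_fderiv (hf p)

theorem uncurry_partialSnd (hf : Differentiable ℝ (uncurry f)) :
    uncurry (partialSnd f) = fun p => fderiv ℝ (uncurry f) p (0, 1) :=
  funext fun p => partialSnd_eq_fderiv (hf p)

theorem ContDiff.uncurry_partialFst {n : WithTop ℕ∞} (hf : ContDiff ℝ (n + 1) (uncurry f)) :
    ContDiff ℝ n (uncurry (partialFst f)) := by
  rw [_root_.uncurry_partialFst (hf.differentiable (by simp))]
  exact (hf.fderiv_right le_rfl).clm_apply contDiff_const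

theorem ContDiff.uncurry_partialSnd {n : WithTop ℕ∞} (hf : ContDiff ℝ (n + 1) (uncurry f)) :
    ContDiff ℝ n (uncurry (partialSnd f)) := by
  rw [_root_.uncurry_partialSnd (hf.differentiable (by simp))]
  exact (hf.fderiv_right le_rfl).clm_apply contDiff_const

theorem partialFst_partialSnd_eq_fderiv_fderiv (hf : ContDiff ℝ 2 (uncurry f)) (t x : ℝ) :
    partialFst (partialSnd f) t x = fderiv ℝ (fderiv ℝ (uncurry f)) (t, x) (1, 0) (0, 1) := by
  have hf' : Differentiable ℝ (fderiv ℝ (uncurry f)) :=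
    (hf.fderiv_right (m := 1) le_rfl).differentiable one_ne_zero
  rw [partialFst_eq_fderiv ((hf.uncurry_partialSnd (n := 1)).differentiable one_ne_zero _),
    _root_.uncurry_partialSnd (hf.differentiable two_ne_zero),
    fderiv_clm_apply (hf' _) (differentiableAt_const _)]
  simp

theorem partialSnd_partialFst_eq_fderiv_fderiv (hf : ContDiff ℝ 2 (uncurry f)) (t x : ℝ) :
    partialSnd (partialFst f) t x = fderiv ℝ (fderiv ℝ (uncurry f)) (t, x) (0, 1) (1, 0) := by
  have hf' : Differentiable ℝ (fderiv ℝ (uncurry f)) :=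
    (hf.fderiv_right (m := 1) le_rfl).differentiable one_ne_zero
  rw [partialSnd_eq_fderiv ((hf.uncurry_partialFst (n := 1)).differentiable one_ne_zero _),
    _root_.uncurry_partialFst (hf.differentiable two_ne_zero),
    fderiv_clm_apply (hf' _) (differentiableAt_const _)]
  simp

theorem partialFst_partialSnd_comm (hf : ContDiff ℝ 2 (uncurry f)) :
    partialFst (partialSnd f) = partialSnd (partialFst f) := by
  ext t x
  rw [partialFst_partialSnd_eq_fderiv_fderiv hf, partialSnd_partialFst_eq_fderiv_fderiv hf]
  exact hf.contDiffAt.isSymmSndFDerivAt (by simp) _ _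

end PartialDerivatives

def IsBacklundPair (a : ℝ → ℝ) (φ ψ : ℝ → ℝ → ℝ) : Prop :=
  ∀ t x, partialSnd φ t x - partialFst ψ t x = -a x * φ t x ∧
    partialFst φ t x - partialSnd ψ t x = -a x * ψ t x

def SolvesKleinGordon (V : ℝ → ℝ) (u : ℝ → ℝ → ℝ) : Prop :=
  ∀ t x, partialFst (partialFst u) t x - partialSnd (partialSnd u) t x + V x * u t x = 0

namespace IsBacklundPair

variable {a : ℝ → ℝ} {φ ψ : ℝ → ℝ → ℝ}

theorem swap (h : IsBacklundPair a φ ψ) : IsBacklundPair (-a) ψ φ := fun t x => by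
  obtain ⟨h₁, h₂⟩ := h t x
  simp only [Pi.neg_apply]
  constructor <;> linarith

theorem solvesKleinGordon_fst (h : IsBacklundPair a φ ψ) (ha : Differentiable ℝ a)
    (hφ : ContDiff ℝ 2 (uncurry φ)) (hψ : ContDiff ℝ 2 (uncurry ψ)) :
    SolvesKleinGordon (fun x => a x ^ 2 - deriv a x) φ := by
  intro t x
  have hφ₁ : Differentiable ℝ (uncurry φ) := hφ.differentiable two_ne_zero
  have hψ₁ : Differentiable ℝ (uncurry ψ) := hψ.differentiable two_ne_zero
  have hφt : Differentiable ℝ (uncurry (partialFst φ)) :=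
    (hφ.uncurry_partialFst (n := 1)).differentiable one_ne_zero
  have hφx : Differentiable ℝ (uncurry (partialSnd φ)) :=
    (hφ.uncurry_partialSnd (n := 1)).differentiable one_ne_zero
  have hψt : Differentiable ℝ (uncurry (partialFst ψ)) :=
    (hψ.uncurry_partialFst (n := 1)).differentiable one_ne_zero
  have hψx : Differentiable ℝ (uncurry (partialSnd ψ)) :=
    (hψ.uncurry_partialSnd (n := 1)).differentiable one_ne_zero
  have htt : partialFst (partialFst φ) t x - partialFst (partialSnd ψ) t x
      = -a x * partialFst ψ t x := by
    have hL := (hasDerivAt_partialFst (hφt (t, x))).sub (hasDerivAt_partialFst (hψx (t, x)))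
    have h₂ (t' : ℝ) := (h t' x).2
    simp only [Pi.sub_def, h₂] at hL
    exact hL.unique ((hasDerivAt_partialFst (hψ₁ (t, x))).const_mul _)
  have hxx : partialSnd (partialSnd φ) t x - partialSnd (partialFst ψ) t x
      = -deriv a x * φ t x + -a x * partialSnd φ t x := by
    have hL := (hasDerivAt_partialSnd (hφx (t, x))).sub (hasDerivAt_partialSnd (hψt (t, x)))
    have h₁ (x' : ℝ) := (h t x').1
    simp only [Pi.sub_def, h₁] at hL
    exact hL.unique ((ha x).hasDerivAt.neg.mul (hasDerivAt_partialSnd (hφ₁ (t, x))))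
  have hcomm := congrFun₂ (partialFst_partialSnd_comm hψ) t x
  linear_combination htt - hxx + hcomm + a x * (h t x).1

theorem solvesKleinGordon_snd (h : IsBacklundPair a φ ψ) (ha : Differentiable ℝ a)
    (hφ : ContDiff ℝ 2 (uncurry φ)) (hψ : ContDiff ℝ 2 (uncurry ψ)) :
    SolvesKleinGordon (fun x => a x ^ 2 + deriv a x) ψ := by
  intro t x
  simpa only [Pi.neg_apply, deriv.neg, neg_sq, sub_neg_eq_add] using
    h.swap.solvesKleinGordon_fst ha.neg hψ hφ t x

end IsBacklundPair

/-- Solutions of the linearized Bäcklund system around the sine-Gordon kink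
satisfy the linearized sine-Gordon equation around the kink, and the linear Klein-Gordon
equation, respectively. -/
theorem linearized_backlund_SG
    (φ ψ : ℝ → ℝ → ℝ)
    (hφ : ContDiff ℝ 2 (fun p : ℝ × ℝ => φ p.1 p.2))
    (hψ : ContDiff ℝ 2 (fun p : ℝ × ℝ => ψ p.1 p.2))
    (h1 : ∀ t x : ℝ,
      deriv (fun x' => φ t x') x - deriv (fun t' => ψ t' x) t
        = -Real.tanh x * φ t x)
    (h2 : ∀ t x : ℝ,
      deriv (fun t' => φ t' x) t - deriv (fun x' => ψ t x') x
        = -Real.tanh x * ψ t x) :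
    (∀ t x : ℝ,
      deriv (fun t' => deriv (fun t'' => φ t'' x) t') t
        - deriv (fun x' => deriv (fun x'' => φ t x'') x') x
        + (1 - 2 * (1 / Real.cosh x) ^ 2) * φ t x = 0)
    ∧ (∀ t x : ℝ,
      deriv (fun t' => deriv (fun t'' => ψ t'' x) t') t
        - deriv (fun x' => deriv (fun x'' => ψ t x'') x') x
        + ψ t x = 0) := by
  have hB : IsBacklundPair tanh φ ψ := fun t x => ⟨h1 t x, h2 t x⟩
  have hVφ : (fun x => tanh x ^ 2 - deriv tanh x) = fun x => 1 - 2 * (1 / cosh x) ^ 2 := by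
    funext x
    rw [deriv_tanh, ← one_sub_tanh_sq]
    ring
  have hVψ : (fun x => tanh x ^ 2 + deriv tanh x) = fun _ => 1 := by
    funext x
    rw [deriv_tanh]
    ring
  have hKφ := hB.solvesKleinGordon_fst differentiable_tanh hφ hψ
  have hKψ := hB.solvesKleinGordon_snd differentiable_tanh hφ hψ
  rw [hVφ] at hKφ
  rw [hVψ] at hKψ
  exact ⟨hKφ, fun t x => by rw [← one_mul (ψ t x)]; exact hKψ t x⟩
end

section
/- Let 𝓛_H = −∂_x² + 2 − 3 sech²(x/√2) be the linearized φ⁴ operator around the kink H(x) = tanh(x/√2). Then the even bounded function R(x) = 1 − (3/2)·sech²(x/√2) is a resonance of 𝓛_H at λ = 2, the bottom of the continuous spectrum: for all x ∈ ℝ, −R''(x) + (2 − 3 sech²(x/√2))·R(x) = 2·R(x). -/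
/-!
With `s = sech² u`, `t = tanh u` one has `s' = -2 t s` and `t' = s`, so `t² = 1 - s` gives
`s'' = 4 s - 6 s²`. Rescaling `u = x / √2` halves the second derivative, hence
`R = 1 - (3/2) s` has `R'' = -3 s + (9/2) s²`, and the quadratic terms cancel in
`-R'' + (2 - 3 s) R = 2 - 3 s = 2 R`.
-/

/-- The even resonance profile of the linearized φ⁴ operator. -/
noncomputable def phi4Res (x : ℝ) : ℝ :=
  1 - (3 / 2) * (1 / Real.cosh (x / Real.sqrt 2)) ^ 2

open Real

namespace Real

theorem tanh_sq_add_one_div_cosh_sq (u : ℝ) : tanh u ^ 2 + (1 / cosh u) ^ 2 = 1 := by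
  rw [tanh_eq_sinh_div_cosh]
  field_simp
  linarith [cosh_sq_sub_sinh_sq u]

theorem hasDerivAt_tanh_s13 (u : ℝ) : HasDerivAt tanh ((1 / cosh u) ^ 2) u := by
  have h := (hasDerivAt_sinh u).div (hasDerivAt_cosh u) (cosh_pos u).ne'
  rw [funext tanh_eq_sinh_div_cosh]
  refine h.congr_deriv ?_
  field_simp
  linear_combination cosh_sq_sub_sinh_sq u

theorem hasDerivAt_one_div_cosh_sq (u : ℝ) :
    HasDerivAt (fun u => (1 / cosh u) ^ 2) (-2 * tanh u * (1 / cosh u) ^ 2) u := by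
  have h := ((hasDerivAt_cosh u).fun_inv (cosh_pos u).ne').fun_pow 2
  simp only [← one_div] at h
  refine h.congr_deriv ?_
  rw [tanh_eq_sinh_div_cosh]
  norm_num
  field_simp

end Real

section ScaledSechSq

variable (c : ℝ)

theorem hasDerivAt_one_div_cosh_div_sq (x : ℝ) :
    HasDerivAt (fun x => (1 / cosh (x / c)) ^ 2)
      (-(2 / c) * tanh (x / c) * (1 / cosh (x / c)) ^ 2) x := by
  have h := (hasDerivAt_one_div_cosh_sq (x / c)).comp x ((hasDerivAt_id' x).div_const c)
  refine h.congr_deriv ?_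
  ring

theorem deriv_one_div_cosh_div_sq :
    deriv (fun x => (1 / cosh (x / c)) ^ 2)
      = fun x => -(2 / c) * tanh (x / c) * (1 / cosh (x / c)) ^ 2 :=
  funext fun x => (hasDerivAt_one_div_cosh_div_sq c x).deriv

theorem hasDerivAt_deriv_one_div_cosh_div_sq (x : ℝ) :
    HasDerivAt (deriv fun x => (1 / cosh (x / c)) ^ 2)
      ((4 * (1 / cosh (x / c)) ^ 2 - 6 * (1 / cosh (x / c)) ^ 4) / c ^ 2) x := by
  have htanh := (hasDerivAt_tanh_s13 (x / c)).comp x ((hasDerivAt_id' x).div_const c)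
  have h := (htanh.const_mul (-(2 / c))).fun_mul (hasDerivAt_one_div_cosh_div_sq c x)
  rw [deriv_one_div_cosh_div_sq]
  refine h.congr_deriv ?_
  simp only [Function.comp_apply]
  linear_combination (4 / c ^ 2 * (1 / cosh (x / c)) ^ 2) * tanh_sq_add_one_div_cosh_sq (x / c)

end ScaledSechSq

theorem deriv_phi4Res :
    deriv phi4Res = fun x => -(3 / 2) * deriv (fun x => (1 / cosh (x / √2)) ^ 2) x := by
  funext x
  rw [deriv_one_div_cosh_div_sq]
  refine (((hasDerivAt_one_div_cosh_div_sq √2 x).const_mul (3 / 2)).const_sub 1).deriv.trans ?_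
  ring

/-- R(x) = 1 − (3/2) sech²(x/√2) is a resonance of
𝓛_H = −∂ₓ² + 2 − 3 sech²(x/√2) at λ = 2, the bottom of the continuous spectrum. -/
theorem phi4_even_resonance :
    ∀ x : ℝ,
      -(deriv (deriv phi4Res) x)
        + (2 - 3 * (1 / Real.cosh (x / Real.sqrt 2)) ^ 2) * phi4Res x
        = 2 * phi4Res x := by
  intro x
  rw [deriv_phi4Res, ((hasDerivAt_deriv_one_div_cosh_div_sq √2 x).const_mul _).deriv, phi4Res,
    sq_sqrt zero_le_two]
  ring
end
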